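/- Induced power structure along a surjective ring homomorphism: let φ : R₁ → R₂ be a surjective homomorphism of commutative rings, and let μ₁ be a finitely determined power structure on R₁ such that μ₁(1−t, r) lies in 1+t·(ker φ)[[t]] for every r ∈ ker φ. Then there exists a unique (finitely determined) power structure μ₂ on R₂ such that φ(μ₁(A(t), r)) = μ₂(φ(A(t)), φ(r)) for all A(t) ∈ 1+t·R₁[[t]] and all r ∈ R₁, where φ is applied to a power series coefficientwise. -/

import Mathlib

/-- Substitution `t ↦ t^i` on formal power series, defined coefficientwise. -/
noncomputable def substPow {R : Type*} [CommRing R] (i : ℕ) (A : PowerSeries R) :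
    PowerSeries R :=
  PowerSeries.mk fun n => if i ∣ n then PowerSeries.coeff (n / i) A else 0

/-- A power structure on a commutative ring `R`: a map `(1 + t·R[[t]]) × R → 1 + t·R[[t]]`,
`(A(t), r) ↦ A(t)^r`, satisfying the seven axioms (i)-(vii).  It is encoded as a total map
`pow : R[[t]] → R → R[[t]]` whose axioms are imposed on series with constant coefficient `1`. -/
structure PowerStructure (R : Type*) [CommRing R] where
  pow : PowerSeries R → R → PowerSeries R
  /-- `A(t)^r` again lies in `1 + t·R[[t]]`. -/
  constantCoeff_pow : ∀ A : PowerSeries R, PowerSeries.constantCoeff A = 1 →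
    ∀ r : R, PowerSeries.constantCoeff (pow A r) = 1
  /-- (i) `A(t)^0 = 1`. -/
  pow_zero : ∀ A : PowerSeries R, PowerSeries.constantCoeff A = 1 → pow A 0 = 1
  /-- (ii) `A(t)^1 = A(t)`. -/
  pow_one : ∀ A : PowerSeries R, PowerSeries.constantCoeff A = 1 → pow A 1 = A
  /-- (iii) `(A(t)·B(t))^r = A(t)^r·B(t)^r`. -/
  mul_pow : ∀ A B : PowerSeries R, PowerSeries.constantCoeff A = 1 →
    PowerSeries.constantCoeff B = 1 → ∀ r : R, pow (A * B) r = pow A r * pow B r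
  /-- (iv) `A(t)^(r+s) = A(t)^r·A(t)^s`. -/
  pow_add : ∀ A : PowerSeries R, PowerSeries.constantCoeff A = 1 →
    ∀ r s : R, pow A (r + s) = pow A r * pow A s
  /-- (v) `A(t)^(r·s) = (A(t)^r)^s`. -/
  pow_mul : ∀ A : PowerSeries R, PowerSeries.constantCoeff A = 1 →
    ∀ r s : R, pow A (r * s) = pow (pow A r) s
  /-- (vi) `(1+t)^r = 1 + r·t + o(t²)`. -/
  pow_one_add_X : ∀ r : R, PowerSeries.coeff 0 (pow (1 + PowerSeries.X) r) = 1 ∧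
    PowerSeries.coeff 1 (pow (1 + PowerSeries.X) r) = r
  /-- (vii) `A(tⁱ)^r = A(t)^r|_{t ↦ tⁱ}` for all `i ≥ 1`. -/
  pow_subst : ∀ A : PowerSeries R, PowerSeries.constantCoeff A = 1 → ∀ r : R,
    ∀ i : ℕ, 1 ≤ i → pow (substPow i A) r = substPow i (pow A r)

/-- A pre-power structure on a commutative ring `R`: a map `S_R × R → 1 + t·R[[t]]` where
`S_R = {1 − tⁱ : i ≥ 1}`, encoded as `pow : ℕ → R → R[[t]]` with `pow i r` standing for
`(1 − tⁱ)^r`, satisfying axioms (i)-(iv) of a pre-power structure. -/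
structure PrePowerStructure (R : Type*) [CommRing R] where
  pow : ℕ → R → PowerSeries R
  /-- `(1 − tⁱ)^r` lies in `1 + t·R[[t]]`. -/
  constantCoeff_pow : ∀ i : ℕ, 1 ≤ i → ∀ r : R,
    PowerSeries.constantCoeff (pow i r) = 1
  /-- (i) `(1−t)⁻¹ = Σ_{i≥0} tⁱ`. -/
  pow_neg_one : pow 1 (-1) = PowerSeries.mk fun _ => (1 : R)
  /-- (ii) `(1−t)^(−a) = 1 + a·t + o(t²)`. -/
  pow_neg : ∀ a : R, PowerSeries.coeff 0 (pow 1 (-a)) = 1 ∧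
    PowerSeries.coeff 1 (pow 1 (-a)) = a
  /-- (iii) `(1−t)^(−(a+b)) = (1−t)^(−a)·(1−t)^(−b)`. -/
  pow_neg_add : ∀ a b : R, pow 1 (-(a + b)) = pow 1 (-a) * pow 1 (-b)
  /-- (iv) if `(1−t)^a = f(t)` then `(1−tⁱ)^a = f(tⁱ)` for all `i ≥ 1`. -/
  pow_subst : ∀ a : R, ∀ i : ℕ, 1 ≤ i → pow i a = substPow i (pow 1 a)

/-- A power structure is finitely determined if for each `i > 0` there is `j > 0` such that
`A(t)^m` modulo `t^(i+1)` is determined by `A(t)` modulo `t^(j+1)`. -/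
def PowerStructure.FinitelyDetermined {R : Type*} [CommRing R] (μ : PowerStructure R) :
    Prop :=
  ∀ i : ℕ, 0 < i → ∃ j : ℕ, 0 < j ∧
    ∀ A B : PowerSeries R, PowerSeries.constantCoeff A = 1 →
      PowerSeries.constantCoeff B = 1 →
      (∀ n ≤ j, PowerSeries.coeff n A = PowerSeries.coeff n B) →
      ∀ m : R, ∀ n ≤ i, PowerSeries.coeff n (μ.pow A m) = PowerSeries.coeff n (μ.pow B m)

/-!
Write `φ` also for the induced map `R₁[[t]] → R₂[[t]]`. The only possible definition is
`μ₂(B, s) := φ(μ₁(A, r))` for lifts `A` of `B` and `r` of `s`, and all axioms of `μ₂` are then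
inherited from `μ₁`; the point is that this does not depend on the lifts. By (iii) and (iv) it
suffices to see that `φ(μ₁(A, q)) = 1` whenever `q ∈ ker φ` or `φ(A) = 1`. Modulo `t^(j+1)`, `A`
is a product of factors `(1 - tᵏ)^(cₖ)` with `k ≤ j`, where `cₖ ∈ ker φ` if `φ(A) = 1`. Finite
determinacy reduces the claim to such products, and `μ₁((1 - tᵏ)^c, q) = (1 - tᵏ)^(cq)` is
killed by `φ` as soon as `cq ∈ ker φ`, by the hypothesis on `μ₁(1 - t, ·)`.
-/

open PowerSeries Function

section SubstPow

variable {R S : Type*} [CommRing R] [CommRing S]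

theorem coeff_substPow (i n : ℕ) (A : PowerSeries R) :
    coeff n (substPow i A) = if i ∣ n then coeff (n / i) A else 0 :=
  coeff_mk _ _

@[simp]
theorem constantCoeff_substPow (i : ℕ) (A : PowerSeries R) :
    constantCoeff (substPow i A) = constantCoeff A := by
  simp [← coeff_zero_eq_constantCoeff, coeff_substPow]

@[simp]
theorem substPow_one (i : ℕ) : substPow i (1 : PowerSeries R) = 1 := by
  ext n
  rw [coeff_substPow, coeff_one, coeff_one]
  rcases eq_or_ne n 0 with rfl | hn
  · simp
  · split_ifs with hdvd h0 <;> try rfl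
    obtain ⟨c, rfl⟩ := hdvd
    rcases Nat.eq_zero_or_pos i with rfl | hi
    · simp at hn
    · rw [Nat.mul_div_cancel_left c hi] at h0
      simp [h0] at hn

theorem map_substPow (φ : R →+* S) (i : ℕ) (A : PowerSeries R) :
    map φ (substPow i A) = substPow i (map φ A) := by
  ext n
  simp only [coeff_map, coeff_substPow, apply_ite φ, map_zero]

theorem substPow_two_one_sub_X : substPow 2 ((1 : PowerSeries R) - X) = (1 - X) * (1 + X) := by
  rw [show ((1 : PowerSeries R) - X) * (1 + X) = 1 - X ^ 2 by ring]
  ext n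
  rw [coeff_substPow, map_sub, map_sub, coeff_one, coeff_one, coeff_X, coeff_X_pow]
  split_ifs <;> first | (exfalso; omega) | norm_num

end SubstPow

section Coeff

variable {R S : Type*} [Semiring R] [Semiring S]

theorem PowerSeries.constantCoeff_map (φ : R →+* S) (A : PowerSeries R) :
    constantCoeff (map φ A) = φ (constantCoeff A) := by
  rw [← coeff_zero_eq_constantCoeff, coeff_map, coeff_zero_eq_constantCoeff]

theorem PowerSeries.map_eq_one_iff (φ : R →+* S) {A : PowerSeries R} (hA : constantCoeff A = 1) :
    map φ A = 1 ↔ ∀ n, 1 ≤ n → φ (coeff n A) = 0 := by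
  refine ⟨fun h n hn => ?_, fun h => ?_⟩
  · simpa [coeff_one, Nat.one_le_iff_ne_zero.mp hn] using congrArg (coeff n) h
  · ext n
    rcases eq_or_ne n 0 with rfl | hn
    · simp [hA]
    · simp [coeff_one, hn, h n (Nat.one_le_iff_ne_zero.mpr hn)]

theorem coeff_mul_eq_add_of_coeff_eq_zero {P Q : PowerSeries R} {k n : ℕ}
    (hP : constantCoeff P = 1) (hQ : constantCoeff Q = 1)
    (hQk : ∀ m, 1 ≤ m → m < k → coeff m Q = 0) (hn : 1 ≤ n) (hnk : n ≤ k) :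
    coeff n (P * Q) = coeff n P + coeff n Q := by
  rw [coeff_mul, ← Finset.sum_subset (s₁ := ({(n, 0), (0, n)} : Finset (ℕ × ℕ)))]
  · rw [Finset.sum_insert (by simp; omega), Finset.sum_singleton]
    simp [hP, hQ]
  · intro p hp
    simp only [Finset.mem_insert, Finset.mem_singleton] at hp
    rcases hp with rfl | rfl <;> simp
  · rintro ⟨a, b⟩ hab hne
    rw [Finset.HasAntidiagonal.mem_antidiagonal] at hab
    simp only [Finset.mem_insert, Finset.mem_singleton, Prod.ext_iff] at hne
    rw [hQk b (by omega) (by omega), mul_zero]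

end Coeff

section Lift

variable {R S : Type*} [CommRing R] [CommRing S] {φ : R →+* S}

noncomputable def liftSeries (hφ : Surjective φ) (B : PowerSeries S) : PowerSeries R :=
  mk fun n => if n = 0 then 1 else surjInv hφ (coeff n B)

theorem constantCoeff_liftSeries (hφ : Surjective φ) (B : PowerSeries S) :
    constantCoeff (liftSeries hφ B) = 1 := by
  simp [liftSeries]

theorem map_liftSeries (hφ : Surjective φ) {B : PowerSeries S} (hB : constantCoeff B = 1) :
    map φ (liftSeries hφ B) = B := by
  ext n
  rcases eq_or_ne n 0 with rfl | hn
  · simp [liftSeries, hB]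
  · simp [liftSeries, hn, surjInv_eq hφ]

theorem exists_map_eq_of_constantCoeff_eq_one (hφ : Surjective φ) {B : PowerSeries S}
    (hB : constantCoeff B = 1) : ∃ A : PowerSeries R, constantCoeff A = 1 ∧ map φ A = B :=
  ⟨liftSeries hφ B, constantCoeff_liftSeries hφ B, map_liftSeries hφ hB⟩

end Lift

namespace PowerStructure

section Approx

variable {R S : Type*} [CommRing R] [CommRing S] (μ : PowerStructure R)

theorem pow_one_left (r : R) : μ.pow 1 r = 1 := by
  have h1 : constantCoeff (1 : PowerSeries R) = 1 := map_one _
  simpa [μ.pow_zero 1 h1] using (μ.pow_mul 1 h1 0 r).symm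

/-- `(1 - tᵏ)^b`. -/
noncomputable def oneSubXPow (k : ℕ) (b : R) : PowerSeries R :=
  substPow k (μ.pow (1 - X) b)

@[simp]
theorem constantCoeff_oneSubXPow (k : ℕ) (b : R) : constantCoeff (μ.oneSubXPow k b) = 1 := by
  rw [oneSubXPow, constantCoeff_substPow]
  exact μ.constantCoeff_pow _ (by simp) b

theorem coeff_oneSubXPow_of_lt {k n : ℕ} (b : R) (hn : 1 ≤ n) (hnk : n < k) :
    coeff n (μ.oneSubXPow k b) = 0 := by
  rw [oneSubXPow, coeff_substPow, if_neg]
  rintro ⟨c, rfl⟩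
  rcases Nat.eq_zero_or_pos c with rfl | hc
  · simp at hn
  · nlinarith

/- `(1 - t)^b (1 + t)^b = (1 - t²)^b` has no linear term, while `(1 + t)^b = 1 + bt + …`
by (vi). -/
theorem coeff_one_pow_one_sub_X (b : R) : coeff 1 (μ.pow (1 - X) b) = -b := by
  have hsub := μ.pow_subst (1 - X) (by simp) b 2 (by norm_num)
  rw [substPow_two_one_sub_X, μ.mul_pow _ _ (by simp) (by simp)] at hsub
  have h1 := congrArg (coeff 1) hsub
  rw [coeff_one_mul, coeff_substPow, if_neg (by omega),
    μ.constantCoeff_pow _ (by simp), μ.constantCoeff_pow _ (by simp),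
    (μ.pow_one_add_X b).2, mul_one, mul_one] at h1
  linear_combination h1

theorem coeff_oneSubXPow_self {k : ℕ} (hk : 1 ≤ k) (b : R) :
    coeff k (μ.oneSubXPow k b) = -b := by
  rw [oneSubXPow, coeff_substPow, if_pos dvd_rfl, Nat.div_self hk, coeff_one_pow_one_sub_X]

theorem pow_oneSubXPow {k : ℕ} (hk : 1 ≤ k) (b r : R) :
    μ.pow (μ.oneSubXPow k b) r = μ.oneSubXPow k (b * r) := by
  rw [oneSubXPow, μ.pow_subst _ (μ.constantCoeff_pow _ (by simp) b) r k hk,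
    ← μ.pow_mul _ (by simp)]
  rfl

variable (φ : R →+* S)

theorem map_oneSubXPow
    (hker : ∀ r : R, φ r = 0 → ∀ n : ℕ, 1 ≤ n → φ (coeff n (μ.pow (1 - X) r)) = 0)
    (k : ℕ) {b : R} (hb : φ b = 0) : map φ (μ.oneSubXPow k b) = 1 := by
  rw [oneSubXPow, map_substPow,
    (map_eq_one_iff φ (μ.constantCoeff_pow _ (by simp) b)).2 (hker b hb), substPow_one]

theorem exists_approx
    (hker : ∀ r : R, φ r = 0 → ∀ n : ℕ, 1 ≤ n → φ (coeff n (μ.pow (1 - X) r)) = 0)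
    {A : PowerSeries R} (hA : constantCoeff A = 1) (j : ℕ) :
    ∃ P : PowerSeries R, constantCoeff P = 1 ∧ (∀ n ≤ j, coeff n P = coeff n A) ∧
      ∀ q : R, φ q = 0 ∨ map φ A = 1 → map φ (μ.pow P q) = 1 := by
  induction j with
  | zero =>
    refine ⟨1, map_one _, fun n hn => ?_, fun q _ => by rw [pow_one_left, map_one]⟩
    simp [Nat.le_zero.mp hn, hA]
  | succ j ih =>
    obtain ⟨P, hP, hPA, hPq⟩ := ih
    set c := coeff (j + 1) P - coeff (j + 1) A with hc
    have hE := μ.constantCoeff_oneSubXPow (j + 1) c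
    refine ⟨P * μ.oneSubXPow (j + 1) c, by rw [map_mul, hP, hE, mul_one], fun n hn => ?_,
      fun q hq => ?_⟩
    · rcases Nat.eq_zero_or_pos n with rfl | hn0
      · simp [hP, hA]
      rw [coeff_mul_eq_add_of_coeff_eq_zero hP hE (fun m => μ.coeff_oneSubXPow_of_lt c) hn0 hn]
      rcases Nat.lt_or_eq_of_le hn with hlt | rfl
      · rw [μ.coeff_oneSubXPow_of_lt c hn0 hlt, add_zero, hPA n (by omega)]
      · rw [μ.coeff_oneSubXPow_self hn0, hc]
        ring
    · have hcq : φ (c * q) = 0 := by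
        rcases hq with hq | hA1
        · rw [map_mul, hq, mul_zero]
        · have hP1 : map φ P = 1 := by simpa [μ.pow_one P hP] using hPq 1 (Or.inr hA1)
          have hPj := (map_eq_one_iff φ hP).1 hP1 (j + 1) (by omega)
          have hAj := (map_eq_one_iff φ hA).1 hA1 (j + 1) (by omega)
          simp [hc, hPj, hAj]
      rw [μ.mul_pow _ _ hP hE, map_mul, hPq q hq, μ.pow_oneSubXPow (by omega),
        μ.map_oneSubXPow φ hker _ hcq, one_mul]

theorem map_pow_eq_one (hfd : μ.FinitelyDetermined)
    (hker : ∀ r : R, φ r = 0 → ∀ n : ℕ, 1 ≤ n → φ (coeff n (μ.pow (1 - X) r)) = 0)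
    {A : PowerSeries R} (hA : constantCoeff A = 1) {q : R} (h : φ q = 0 ∨ map φ A = 1) :
    map φ (μ.pow A q) = 1 := by
  refine (map_eq_one_iff φ (μ.constantCoeff_pow A hA q)).2 fun n hn => ?_
  obtain ⟨j, -, hj⟩ := hfd n hn
  obtain ⟨P, hP, hPA, hPq⟩ := μ.exists_approx φ hker hA j
  rw [hj A P hA hP (fun m hm => (hPA m hm).symm) q n le_rfl]
  exact (map_eq_one_iff φ (μ.constantCoeff_pow P hP q)).1 (hPq q h) n hn

def DescendsAlong : Prop :=
  ∀ A B : PowerSeries R, constantCoeff A = 1 → constantCoeff B = 1 → map φ A = map φ B →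
    ∀ r s : R, φ r = φ s → map φ (μ.pow A r) = map φ (μ.pow B s)

theorem descendsAlong_of_finitelyDetermined (hfd : μ.FinitelyDetermined)
    (hker : ∀ r : R, φ r = 0 → ∀ n : ℕ, 1 ≤ n → φ (coeff n (μ.pow (1 - X) r)) = 0) :
    μ.DescendsAlong φ := by
  intro A B hA hB hAB r s hrs
  obtain ⟨u, hu⟩ := (isUnit_iff_constantCoeff.2 (hB ▸ isUnit_one)).exists_right_inv
  have hu0 : constantCoeff u = 1 := by simpa [hB] using congrArg constantCoeff hu
  have hC : constantCoeff (A * u) = 1 := by simp [hA, hu0]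
  have hBC : B * (A * u) = A := by rw [mul_left_comm, hu, mul_one]
  have hC1 : map φ (A * u) = 1 := by rw [map_mul, hAB, ← map_mul, hu, map_one]
  calc map φ (μ.pow A r) = map φ (μ.pow A s) * map φ (μ.pow A (r - s)) := by
        rw [← map_mul, ← μ.pow_add A hA, add_sub_cancel]
    _ = map φ (μ.pow A s) := by
        rw [μ.map_pow_eq_one φ hfd hker hA (q := r - s)
          (Or.inl (by rw [map_sub, hrs, sub_self])), mul_one]
    _ = map φ (μ.pow B s) * map φ (μ.pow (A * u) s) := by
        rw [← map_mul, ← μ.mul_pow B _ hB hC, hBC]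
    _ = map φ (μ.pow B s) := by
        rw [μ.map_pow_eq_one φ hfd hker hC (Or.inr hC1), mul_one]

end Approx

section Descent

variable {R S : Type*} [CommRing R] [CommRing S] {φ : R →+* S} {μ : PowerStructure R}

theorem pow_eq_of_map_pow_eq (hφ : Surjective φ) {μ₂ μ₂' : PowerStructure S}
    (h₂ : ∀ A : PowerSeries R, constantCoeff A = 1 → ∀ r : R,
      map φ (μ.pow A r) = μ₂.pow (map φ A) (φ r))
    (h₂' : ∀ A : PowerSeries R, constantCoeff A = 1 → ∀ r : R,
      map φ (μ.pow A r) = μ₂'.pow (map φ A) (φ r))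
    {B : PowerSeries S} (hB : constantCoeff B = 1) (s : S) : μ₂.pow B s = μ₂'.pow B s := by
  obtain ⟨A, hA, rfl⟩ := exists_map_eq_of_constantCoeff_eq_one hφ hB
  obtain ⟨r, rfl⟩ := hφ s
  rw [← h₂ A hA r, h₂' A hA r]

variable (hφ : Surjective φ)

variable (μ) in
noncomputable def descendPow (B : PowerSeries S) (s : S) : PowerSeries S :=
  map φ (μ.pow (liftSeries hφ B) (surjInv hφ s))

theorem descendPow_map (h : μ.DescendsAlong φ) {A : PowerSeries R} (hA : constantCoeff A = 1)
    (r : R) : μ.descendPow hφ (map φ A) (φ r) = map φ (μ.pow A r) :=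
  h _ _ (constantCoeff_liftSeries hφ _) hA
    (map_liftSeries hφ (by rw [constantCoeff_map, hA, map_one])) _ _ (surjInv_eq hφ _)

noncomputable def descend (h : μ.DescendsAlong φ) : PowerStructure S where
  pow := μ.descendPow hφ
  constantCoeff_pow B hB s := by
    obtain ⟨A, hA, rfl⟩ := exists_map_eq_of_constantCoeff_eq_one hφ hB
    obtain ⟨r, rfl⟩ := hφ s
    rw [descendPow_map hφ h hA, constantCoeff_map, μ.constantCoeff_pow A hA, map_one]
  pow_zero B hB := by
    obtain ⟨A, hA, rfl⟩ := exists_map_eq_of_constantCoeff_eq_one hφ hB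
    rw [← map_zero φ, descendPow_map hφ h hA, μ.pow_zero A hA, map_one]
  pow_one B hB := by
    obtain ⟨A, hA, rfl⟩ := exists_map_eq_of_constantCoeff_eq_one hφ hB
    rw [← map_one φ, descendPow_map hφ h hA, μ.pow_one A hA]
  mul_pow B C hB hC s := by
    obtain ⟨A, hA, rfl⟩ := exists_map_eq_of_constantCoeff_eq_one hφ hB
    obtain ⟨A', hA', rfl⟩ := exists_map_eq_of_constantCoeff_eq_one hφ hC
    obtain ⟨r, rfl⟩ := hφ s
    have hAA' : constantCoeff (A * A') = 1 := by rw [map_mul, hA, hA', mul_one]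
    rw [← map_mul, descendPow_map hφ h hAA', descendPow_map hφ h hA, descendPow_map hφ h hA',
      μ.mul_pow A A' hA hA', map_mul]
  pow_add B hB s s' := by
    obtain ⟨A, hA, rfl⟩ := exists_map_eq_of_constantCoeff_eq_one hφ hB
    obtain ⟨r, rfl⟩ := hφ s
    obtain ⟨r', rfl⟩ := hφ s'
    rw [← map_add, descendPow_map hφ h hA, descendPow_map hφ h hA, descendPow_map hφ h hA,
      μ.pow_add A hA, map_mul]
  pow_mul B hB s s' := by
    obtain ⟨A, hA, rfl⟩ := exists_map_eq_of_constantCoeff_eq_one hφ hB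
    obtain ⟨r, rfl⟩ := hφ s
    obtain ⟨r', rfl⟩ := hφ s'
    rw [← map_mul, descendPow_map hφ h hA, descendPow_map hφ h hA,
      descendPow_map hφ h (μ.constantCoeff_pow A hA r), μ.pow_mul A hA]
  pow_one_add_X s := by
    obtain ⟨r, rfl⟩ := hφ s
    have hX : map φ (1 + X) = 1 + X := by rw [map_add, map_one, map_X]
    rw [← hX, descendPow_map hφ h (by simp), coeff_map, coeff_map, (μ.pow_one_add_X r).1,
      (μ.pow_one_add_X r).2, map_one]
    exact ⟨rfl, rfl⟩
  pow_subst B hB s i hi := by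
    obtain ⟨A, hA, rfl⟩ := exists_map_eq_of_constantCoeff_eq_one hφ hB
    obtain ⟨r, rfl⟩ := hφ s
    rw [← map_substPow, descendPow_map hφ h (by rw [constantCoeff_substPow, hA]),
      descendPow_map hφ h hA, μ.pow_subst A hA r i hi, map_substPow]

theorem map_pow_eq_descend_pow (h : μ.DescendsAlong φ) {A : PowerSeries R}
    (hA : constantCoeff A = 1) (r : R) :
    map φ (μ.pow A r) = (μ.descend hφ h).pow (map φ A) (φ r) :=
  (descendPow_map hφ h hA r).symm

theorem finitelyDetermined_descend (h : μ.DescendsAlong φ) (hfd : μ.FinitelyDetermined) :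
    (μ.descend hφ h).FinitelyDetermined := by
  intro i hi
  obtain ⟨j, hj, hdet⟩ := hfd i hi
  refine ⟨j, hj, fun B B' _ _ hBB' s n hn => ?_⟩
  simp only [descend, descendPow, coeff_map]
  rw [hdet _ _ (constantCoeff_liftSeries hφ B) (constantCoeff_liftSeries hφ B')
    (fun m hm => by simp [liftSeries, hBB' m hm]) _ n hn]

end Descent

end PowerStructure

/-- Induced power structure along a surjective ring homomorphism `φ : R₁ → R₂`: if `μ₁` is a
finitely determined power structure on `R₁` with `μ₁(1−t, r) ∈ 1 + t·(ker φ)[[t]]` for every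
`r ∈ ker φ`, then there is a unique (finitely determined) power structure `μ₂` on `R₂` with
`φ(μ₁(A(t), r)) = μ₂(φ(A(t)), φ(r))` for all `A(t) ∈ 1 + t·R₁[[t]]` and `r ∈ R₁`
(uniqueness meaning: any power structure `μ₂'` compatible with `φ` in this sense agrees with
`μ₂` on all of `(1 + t·R₂[[t]]) × R₂`). -/
theorem induced_powerStructure_of_surjective {R₁ R₂ : Type*} [CommRing R₁] [CommRing R₂]
    (φ : R₁ →+* R₂) (hφ : Function.Surjective φ) (μ₁ : PowerStructure R₁)
    (hfd : μ₁.FinitelyDetermined)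
    (hker : ∀ r : R₁, φ r = 0 → ∀ n : ℕ, 1 ≤ n →
      φ (PowerSeries.coeff n (μ₁.pow (1 - PowerSeries.X) r)) = 0) :
    ∃ μ₂ : PowerStructure R₂, μ₂.FinitelyDetermined ∧
      (∀ A : PowerSeries R₁, PowerSeries.constantCoeff A = 1 → ∀ r : R₁,
        PowerSeries.map φ (μ₁.pow A r) = μ₂.pow (PowerSeries.map φ A) (φ r)) ∧
      ∀ μ₂' : PowerStructure R₂,
        (∀ A : PowerSeries R₁, PowerSeries.constantCoeff A = 1 → ∀ r : R₁,
          PowerSeries.map φ (μ₁.pow A r) = μ₂'.pow (PowerSeries.map φ A) (φ r)) →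
        ∀ B : PowerSeries R₂, PowerSeries.constantCoeff B = 1 → ∀ s : R₂,
          μ₂'.pow B s = μ₂.pow B s := by
  have h := μ₁.descendsAlong_of_finitelyDetermined φ hfd hker
  have hcompat := fun A (hA : constantCoeff A = 1) r => μ₁.map_pow_eq_descend_pow hφ h hA r
  exact ⟨μ₁.descend hφ h, PowerStructure.finitelyDetermined_descend hφ h hfd, hcompat,
    fun μ₂' h' B hB s => PowerStructure.pow_eq_of_map_pow_eq hφ h' hcompat hB s⟩
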